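/- (Full amalgamation) Let α ∈ ω+1 and let A, B, C ∈ K_α with A = B ∩ C and A ≤* B (A is closed in B). Then the free join of B and C over A — the graph on vertex set B ∪ C whose edge set is the union of the edge sets of B and of C — belongs to K_α, and C is closed in it (C ≤* B ⊕_A C). -/

import Mathlib

open SimpleGraph

/-- The predimension of a finite set `A` of vertices: `|A| - e(A)`, where `e(A)` is the
number of edges of the induced subgraph on `A`. -/
noncomputable def delta {V : Type*} (G : SimpleGraph V) (A : Finset V) : ℤ :=
  (A.card : ℤ) - (Nat.card (G.induce (A : Set V)).edgeSet : ℤ)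

/-- `A` is closed in `B` (`A ≤* B`): `A ⊆ B` and `δ(C) > δ(A)` for every finite `C` with
`A ⊊ C ⊆ B`. -/
def Closed {V : Type*} (G : SimpleGraph V) (A B : Finset V) : Prop :=
  A ⊆ B ∧ ∀ C : Finset V, A ⊂ C → C ⊆ B → delta G A < delta G C

/-- `A` is weakly closed in `B` (`A ≤ B`). -/
def WClosed {V : Type*} (G : SimpleGraph V) (A B : Finset V) : Prop :=
  A ⊆ B ∧ ∀ C : Finset V, A ⊆ C → C ⊆ B → delta G A ≤ delta G C

/-- `A ≤* M` : `A` is closed in every finite superset inside the graph. -/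
def ClosedIn {V : Type*} (G : SimpleGraph V) (A : Finset V) : Prop :=
  ∀ B : Finset V, A ⊆ B → Closed G A B

def WClosedIn {V : Type*} (G : SimpleGraph V) (A : Finset V) : Prop :=
  ∀ B : Finset V, A ⊆ B → WClosed G A B

/-- `(A,B)` is a minimal pair. -/
def MinPair {V : Type*} (G : SimpleGraph V) (A B : Finset V) : Prop :=
  A ⊆ B ∧ (∀ C : Finset V, A ⊆ C → C ⊂ B → Closed G A C) ∧ ¬ Closed G A B

def WMinPair {V : Type*} (G : SimpleGraph V) (A B : Finset V) : Prop :=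
  A ⊆ B ∧ (∀ C : Finset V, A ⊆ C → C ⊂ B → WClosed G A C) ∧ ¬ WClosed G A B

/-- `B` is an intrinsic extension of `A`. -/
def IntrinsicExt {V : Type*} (G : SimpleGraph V) (A B : Finset V) : Prop :=
  A ⊆ B ∧ ∀ C : Finset V, A ⊆ C → C ⊂ B → ¬ Closed G C B

def WIntrinsicExt {V : Type*} (G : SimpleGraph V) (A B : Finset V) : Prop :=
  A ⊆ B ∧ ∀ C : Finset V, A ⊆ C → C ⊂ B → ¬ WClosed G C B

/-- The closure `cl*_M(N)`. -/
def clStar {V : Type*} (G : SimpleGraph V) (N : Set V) : Set V :=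
  {b | ∃ A E : Finset V, (A : Set V) ⊆ N ∧ IntrinsicExt G A E ∧ b ∈ E}

/-- The weak closure `cl_M(N)`. -/
def clWeak {V : Type*} (G : SimpleGraph V) (N : Set V) : Set V :=
  {b | ∃ A E : Finset V, (A : Set V) ⊆ N ∧ WIntrinsicExt G A E ∧ b ∈ E}

/-- Membership of the finite induced subgraph on `A` in the class `K_α`, for
`α ∈ ω + 1` (coded as `α : ℕ∞`, where `⊤` codes `ω`):
* every nonempty subset has positive predimension (i.e. it is a forest); and
* if `α = n` with `1 ≤ n < ω`: no vertex having at least `n + 2` neighbours in `A` is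
  the starting point of a path of length `2n + 1` inside `A`;
* if `α = 0`: every vertex has at most `3` neighbours in `A`;
* if `α = ω`: no further condition. -/
def InK {V : Type*} (α : ℕ∞) (G : SimpleGraph V) (A : Finset V) : Prop :=
  (∀ S : Finset V, S ⊆ A → S.Nonempty → 0 < delta G S) ∧
  ∀ n : ℕ, α = (n : ℕ∞) →
    if n = 0 then
      ∀ a ∈ A, ∀ s : Finset V, s ⊆ A → (∀ b ∈ s, G.Adj a b) → s.card ≤ 3
    else
      ∀ a ∈ A, (∃ s : Finset V, s ⊆ A ∧ (∀ b ∈ s, G.Adj a b) ∧ n + 2 ≤ s.card) →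
        ¬ ∃ (y : V) (p : G.Walk a y),
            p.IsPath ∧ p.length = 2 * n + 1 ∧ ∀ v ∈ p.support, v ∈ A

/-!
Since `A ≤* B`, no vertex of `A` has a neighbour in `B \ A`: adding it to `A` would not increase
the predimension. So in the free join the vertex sets `C` and `B \ C` are unions of components,
carrying the graphs of `C` and of `B` respectively. Hence the predimension splits as
`δ(S) = δ_B(S \ C) + δ_C(S ∩ C)`, which gives both positivity and `C ≤* B ⊕_A C`, and every
neighbourhood or path lies inside `C` or inside `B \ C`, where the conditions of `K_α` hold.
-/

open Finset

section Amalgamation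

variable {V : Type*}

open Classical in
noncomputable def edgesWithin (G : SimpleGraph V) (S : Finset V) : Finset (Sym2 V) :=
  {e ∈ S.sym2 | e ∈ G.edgeSet}

section Predimension

variable {G H : SimpleGraph V} {S T : Finset V}

lemma mem_edgesWithin {e : Sym2 V} :
    e ∈ edgesWithin G S ↔ e ∈ G.edgeSet ∧ ∀ v ∈ e, v ∈ S := by
  classical
  simp [edgesWithin, Finset.mem_sym2_iff, and_comm]

@[simp]
lemma mk_mem_edgesWithin {x y : V} :
    s(x, y) ∈ edgesWithin G S ↔ G.Adj x y ∧ x ∈ S ∧ y ∈ S := by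
  simp [mem_edgesWithin]

lemma card_edgeSet_induce (G : SimpleGraph V) (S : Finset V) :
    Nat.card (G.induce (S : Set V)).edgeSet = #(edgesWithin G S) := by
  have himage : Sym2.map Subtype.val '' (G.induce (S : Set V)).edgeSet = ↑(edgesWithin G S) := by
    ext e
    constructor
    · rintro ⟨e, he, rfl⟩
      induction e using Sym2.ind with
      | _ a b => exact mk_mem_edgesWithin.mpr ⟨he, a.2, b.2⟩
    · intro he
      induction e using Sym2.ind with
      | _ x y =>
        obtain ⟨hxy, hx, hy⟩ := mk_mem_edgesWithin.mp he
        exact ⟨s(⟨x, hx⟩, ⟨y, hy⟩), hxy, rfl⟩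
  rw [← Nat.card_image_of_injective (Sym2.map.injective Subtype.val_injective), himage,
    Nat.card_coe_set_eq, Set.ncard_coe_finset]

lemma delta_eq_card_sub_card_edgesWithin (G : SimpleGraph V) (S : Finset V) :
    delta G S = #S - #(edgesWithin G S) := by
  rw [delta, card_edgeSet_induce]

@[simp]
lemma delta_empty (G : SimpleGraph V) : delta G ∅ = 0 := by
  simp [delta_eq_card_sub_card_edgesWithin, edgesWithin]

lemma delta_congr (h : ∀ x ∈ S, ∀ y ∈ S, G.Adj x y ↔ H.Adj x y) :
    delta G S = delta H S := by
  have : edgesWithin G S = edgesWithin H S := by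
    ext e
    induction e using Sym2.ind with
    | _ x y =>
      simp only [mk_mem_edgesWithin]
      exact ⟨fun ⟨hxy, hx, hy⟩ => ⟨(h x hx y hy).1 hxy, hx, hy⟩,
        fun ⟨hxy, hx, hy⟩ => ⟨(h x hx y hy).2 hxy, hx, hy⟩⟩
  rw [delta_eq_card_sub_card_edgesWithin, delta_eq_card_sub_card_edgesWithin, this]

lemma delta_union [DecidableEq V] (hST : Disjoint S T)
    (h : ∀ x ∈ S, ∀ y ∈ T, ¬ G.Adj x y) :
    delta G (S ∪ T) = delta G S + delta G T := by
  have hunion : edgesWithin G (S ∪ T) = edgesWithin G S ∪ edgesWithin G T := by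
    ext e
    induction e using Sym2.ind with
    | _ x y =>
      simp only [mk_mem_edgesWithin, mem_union]
      grind [G.adj_symm]
  have hdisj : Disjoint (edgesWithin G S) (edgesWithin G T) := by
    rw [Finset.disjoint_left]
    intro e hS hT
    induction e using Sym2.ind with
    | _ x y =>
      exact Finset.disjoint_left.mp hST (mk_mem_edgesWithin.mp hS).2.1
        (mk_mem_edgesWithin.mp hT).2.1
  simp only [delta_eq_card_sub_card_edgesWithin, hunion, card_union_of_disjoint hST,
    card_union_of_disjoint hdisj]
  push_cast
  ring

lemma delta_insert_le [DecidableEq V] {a b : V} (ha : a ∈ S) (hab : G.Adj a b) :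
    delta G (insert b S) ≤ delta G S := by
  by_cases hb : b ∈ S
  · rw [insert_eq_of_mem hb]
  have hsub : edgesWithin G S ⊂ edgesWithin G (insert b S) := by
    refine Finset.ssubset_iff_subset_ne.mpr ⟨fun e he => ?_, fun heq => ?_⟩
    · rw [mem_edgesWithin] at he ⊢
      exact ⟨he.1, fun v hv => mem_insert_of_mem (he.2 v hv)⟩
    · have : s(a, b) ∈ edgesWithin G (insert b S) := by simp [hab, ha]
      rw [← heq] at this
      exact hb (mk_mem_edgesWithin.mp this).2.2
  have := card_lt_card hsub
  rw [delta_eq_card_sub_card_edgesWithin, delta_eq_card_sub_card_edgesWithin,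
    card_insert_of_notMem hb]
  push_cast
  omega

lemma Closed.mem_of_adj [DecidableEq V] {A B : Finset V} (h : Closed G A B) {a b : V}
    (ha : a ∈ A) (hab : G.Adj a b) (hb : b ∈ B) : b ∈ A := by
  by_contra hbA
  exact (delta_insert_le ha hab).not_gt
    (h.2 _ (ssubset_insert hbA) (insert_subset hb h.1))

end Predimension

def AdjInside (G H : SimpleGraph V) (U : Finset V) : Prop :=
  ∀ x ∈ U, ∀ y, G.Adj x y → H.Adj x y ∧ y ∈ U

namespace AdjInside

variable {G H : SimpleGraph V} {U : Finset V}

lemma walk (hU : AdjInside G H U) {u w : V} (p : G.Walk u w) (hu : u ∈ U) :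
    (∀ e ∈ p.edges, e ∈ H.edgeSet) ∧ ∀ x ∈ p.support, x ∈ U := by
  induction p with
  | nil => simpa using hu
  | cons hadj q ih =>
    obtain ⟨hH, hv⟩ := hU _ hu _ hadj
    obtain ⟨hedges, hsupp⟩ := ih hv
    simp only [Walk.edges_cons, List.mem_cons, Walk.support_cons, forall_eq_or_imp]
    exact ⟨⟨hH, hedges⟩, hu, hsupp⟩

lemma delta_eq (hU : AdjInside G H U) (hHG : H ≤ G) {S : Finset V} (hS : S ⊆ U) :
    delta G S = delta H S :=
  delta_congr fun x hx y _ => ⟨fun h => (hU x (hS hx) y h).1, fun h => hHG h⟩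

lemma delta_eq_sdiff_add_inter [DecidableEq V] (hU : AdjInside G H U) (S : Finset V) :
    delta G S = delta G (S \ U) + delta G (S ∩ U) := by
  conv_lhs => rw [← sdiff_union_inter S U]
  refine delta_union (disjoint_sdiff_inter S U) fun x hx y hy hxy => ?_
  exact (mem_sdiff.mp hx).2 (hU y (mem_inter.mp hy).2 x hxy.symm).2

end AdjInside

section ClassK

variable {α : ℕ∞} {G : SimpleGraph V} {X : Finset V}

lemma InK.delta_nonneg (h : InK α G X) {S : Finset V} (hS : S ⊆ X) : 0 ≤ delta G S := by
  rcases S.eq_empty_or_nonempty with rfl | hne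
  · rw [delta_empty]
  · exact (h.1 S hS hne).le

lemma inK_of_forall_adjInside (hpos : ∀ S ⊆ X, S.Nonempty → 0 < delta G S)
    (hloc : ∀ a ∈ X, ∃ (H : SimpleGraph V) (Y U : Finset V),
      a ∈ U ∧ U ⊆ Y ∧ AdjInside G H U ∧ InK α H Y) :
    InK α G X := by
  refine ⟨hpos, fun n hn => ?_⟩
  split_ifs with hn0
  · intro a ha s _ hs
    obtain ⟨H, Y, U, haU, hUY, hU, hK⟩ := hloc a ha
    have hdeg := hK.2 n hn
    rw [if_pos hn0] at hdeg
    exact hdeg a (hUY haU) s (fun b hb => hUY (hU a haU b (hs b hb)).2)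
      fun b hb => (hU a haU b (hs b hb)).1
  · rintro a ha ⟨s, -, hs, hcard⟩ ⟨y, p, hp, hlen, -⟩
    obtain ⟨H, Y, U, haU, hUY, hU, hK⟩ := hloc a ha
    obtain ⟨hedges, hsupp⟩ := hU.walk p haU
    have hpath := hK.2 n hn
    rw [if_neg hn0] at hpath
    refine hpath a (hUY haU) ⟨s, fun b hb => hUY (hU a haU b (hs b hb)).2,
      fun b hb => (hU a haU b (hs b hb)).1, hcard⟩
      ⟨y, p.transfer H hedges, hp.transfer hedges, by rw [Walk.length_transfer, hlen], ?_⟩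
    rw [Walk.support_transfer]
    exact fun v hv => hUY (hsupp v hv)

end ClassK

lemma adjInside_of_closed [DecidableEq V] {GB GC : SimpleGraph V} {A B C : Finset V}
    (hGB : ∀ x y : V, GB.Adj x y → x ∈ B ∧ y ∈ B) (hA : A = B ∩ C)
    (hagree : ∀ a a' : V, a ∈ A → a' ∈ A → (GB.Adj a a' ↔ GC.Adj a a'))
    (hclosed : Closed GB A B) :
    AdjInside GB GC C := by
  intro x hx y hxy
  have hxA : x ∈ A := hA ▸ mem_inter.mpr ⟨(hGB x y hxy).1, hx⟩
  have hyA : y ∈ A := hclosed.mem_of_adj hxA hxy (hGB x y hxy).2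
  exact ⟨(hagree x y hxA hyA).1 hxy, (mem_inter.mp (hA ▸ hyA)).2⟩

section FreeJoin

variable {α : ℕ∞} {GB GC : SimpleGraph V} {B C : Finset V}

lemma AdjInside.sup_right (hBC : AdjInside GB GC C)
    (hGC : ∀ x y : V, GC.Adj x y → x ∈ C ∧ y ∈ C) : AdjInside (GB ⊔ GC) GC C := by
  rintro x hx y (hxy | hxy)
  · exact hBC x hx y hxy
  · exact ⟨hxy, (hGC x y hxy).2⟩

lemma AdjInside.sup_left_sdiff [DecidableEq V] (hBC : AdjInside GB GC C)
    (hGB : ∀ x y : V, GB.Adj x y → x ∈ B ∧ y ∈ B)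
    (hGC : ∀ x y : V, GC.Adj x y → x ∈ C ∧ y ∈ C) :
    AdjInside (GB ⊔ GC) GB (B \ C) := by
  rintro x hx y (hxy | hxy)
  · refine ⟨hxy, mem_sdiff.mpr ⟨(hGB x y hxy).2, fun hy => ?_⟩⟩
    exact (mem_sdiff.mp hx).2 (hBC y hy x hxy.symm).2
  · exact absurd (hGC x y hxy).1 (mem_sdiff.mp hx).2

lemma delta_sup_eq [DecidableEq V] (hC : AdjInside (GB ⊔ GC) GC C)
    (hB : AdjInside (GB ⊔ GC) GB (B \ C)) {S : Finset V} (hS : S ⊆ B ∪ C) :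
    delta (GB ⊔ GC) S = delta GB (S \ C) + delta GC (S ∩ C) := by
  rw [hC.delta_eq_sdiff_add_inter, hC.delta_eq le_sup_right inter_subset_right,
    hB.delta_eq le_sup_left (union_sdiff_right B C ▸ sdiff_subset_sdiff hS subset_rfl)]

lemma inK_sup [DecidableEq V] (hC : AdjInside (GB ⊔ GC) GC C)
    (hB : AdjInside (GB ⊔ GC) GB (B \ C))
    (hBK : InK α GB B) (hCK : InK α GC C) : InK α (GB ⊔ GC) (B ∪ C) := by
  refine inK_of_forall_adjInside (fun S hS hne => ?_) (fun a ha => ?_)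
  · have hSB : S \ C ⊆ B := sdiff_le_iff'.mpr hS
    have hB0 : 0 ≤ delta GB (S \ C) := hBK.delta_nonneg hSB
    have hC0 : 0 ≤ delta GC (S ∩ C) := hCK.delta_nonneg inter_subset_right
    rw [delta_sup_eq hC hB hS]
    rcases (S ∩ C).eq_empty_or_nonempty with hSC | hSC
    · have hne' : (S \ C).Nonempty := by rwa [← sdiff_union_inter S C, hSC, union_empty] at hne
      linarith [hBK.1 _ hSB hne']
    · linarith [hCK.1 _ inter_subset_right hSC]
  · by_cases haC : a ∈ C
    · exact ⟨GC, C, C, haC, subset_rfl, hC, hCK⟩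
    · exact ⟨GB, B, B \ C, mem_sdiff.mpr ⟨(mem_union.mp ha).resolve_right haC, haC⟩,
        sdiff_subset, hB, hBK⟩

lemma closed_sup [DecidableEq V] (hC : AdjInside (GB ⊔ GC) GC C)
    (hB : AdjInside (GB ⊔ GC) GB (B \ C))
    (hBK : InK α GB B) : Closed (GB ⊔ GC) C (B ∪ C) := by
  refine ⟨subset_union_right, fun S hCS hS => ?_⟩
  have hSB : S \ C ⊆ B := sdiff_le_iff'.mpr hS
  rw [delta_sup_eq hC hB hS, delta_sup_eq hC hB subset_union_right, Finset.sdiff_self,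
    inter_self, inter_eq_right.mpr hCS.subset, delta_empty, zero_add, lt_add_iff_pos_left]
  exact hBK.1 _ hSB (sdiff_nonempty.mpr hCS.not_subset)

end FreeJoin

end Amalgamation

/-- Full amalgamation: Let `α ∈ ω+1` and `A, B, C ∈ K_α` with
`A = B ∩ C` and `A ≤* B`. Then the free join of `B` and `C` over `A` — the graph on
`B ∪ C` whose edge set is the union of the edge sets of `B` and `C` — belongs to
`K_α`, and `C` is closed in it. Here `B` and `C` are presented as graphs `GB`, `GC`
on a common vertex set, with all edges inside `B` resp. `C`, agreeing on `A = B ∩ C`;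
the free join is `GB ⊔ GC`. -/
theorem stmt_14 {V : Type*} [DecidableEq V] (α : ℕ∞) (A B C : Finset V)
    (GB GC : SimpleGraph V)
    (hGB : ∀ x y : V, GB.Adj x y → x ∈ B ∧ y ∈ B)
    (hGC : ∀ x y : V, GC.Adj x y → x ∈ C ∧ y ∈ C)
    (hA : A = B ∩ C)
    (hagree : ∀ a a' : V, a ∈ A → a' ∈ A → (GB.Adj a a' ↔ GC.Adj a a'))
    (hBK : InK α GB B) (hCK : InK α GC C)
    (hclosed : Closed GB A B) :
    InK α (GB ⊔ GC) (B ∪ C) ∧ Closed (GB ⊔ GC) C (B ∪ C) := by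
  have hBC : AdjInside GB GC C := adjInside_of_closed hGB hA hagree hclosed
  have hC : AdjInside (GB ⊔ GC) GC C := hBC.sup_right hGC
  have hB : AdjInside (GB ⊔ GC) GB (B \ C) := hBC.sup_left_sdiff hGB hGC
  exact ⟨inK_sup hC hB hBK hCK, closed_sup hC hB hBK⟩
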